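/- arXiv:1903.09283 — 3 statements merged into one kernel-verified Lean document; each statement's English description precedes it below -/
import Mathlib

section
/- Let P be an N×(N-1) complex matrix, let Q be the N×(N-k+1) matrix obtained from P by deleting any k-2 of its columns (3 ≤ k < N), and let a_1, ..., a_k ∈ ℂ^N. Then the alternating sum over i = 1, ..., k of (-1)^{i-1} det(P, a_i) · det(Q, a_1, ..., a_{i-1}, a_{i+1}, ..., a_k) equals zero. -/
/-!
`v ↦ det(P, v)` is a linear functional `φ` vanishing on the columns of `P`. For any linear
functional `φ` on `R^(m+1)` and any `(m+1) × (m+2)` matrix `U`, the alternating sum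
`∑ⱼ (-1)^j φ(uⱼ) det(U without column j)` vanishes: for a coordinate functional it is the
Laplace expansion of a determinant with a repeated row. Take for `U` the columns of `Q`
followed by `a₁, …, a_k`; the terms indexed by columns of `Q` die because `φ` kills them, and
the remaining ones are, up to the common sign `(-1)^(N+1-k)`, the terms of the claimed sum.
-/

open Matrix

namespace Matrix

section Determinant

variable {R : Type*} [CommRing R]

theorem sum_alternating_mul_det_submatrix_succAbove {m : ℕ}
    (U : Matrix (Fin (m + 1)) (Fin (m + 2)) R) (r : Fin (m + 1)) :
    ∑ j : Fin (m + 2), (-1) ^ (j : ℕ) * U r j * (U.submatrix id j.succAbove).det = 0 := by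
  have hrep : (U.submatrix (Fin.cons r id : Fin (m + 2) → Fin (m + 1)) id).det = 0 :=
    det_zero_of_row_eq (Fin.succ_ne_zero r).symm rfl
  rwa [det_succ_row_zero] at hrep

theorem sum_alternating_map_col_mul_det_submatrix_succAbove {m : ℕ}
    (φ : (Fin (m + 1) → R) →ₗ[R] R) (U : Matrix (Fin (m + 1)) (Fin (m + 2)) R) :
    ∑ j : Fin (m + 2), (-1) ^ (j : ℕ) * φ (fun r => U r j) * (U.submatrix id j.succAbove).det
      = 0 := by
  have hφ (j : Fin (m + 2)) : φ (fun r => U r j) = ∑ r, U r j * φ (Pi.single r 1) := by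
    rw [φ.pi_apply_eq_sum_univ]
    congr! with r
    simp [Pi.single_apply, eq_comm]
  simp_rw [hφ, Finset.mul_sum, Finset.sum_mul]
  rw [Finset.sum_comm]
  refine Finset.sum_eq_zero fun r _ => ?_
  calc _ = φ (Pi.single r 1) *
          ∑ j : Fin (m + 2), (-1) ^ (j : ℕ) * U r j * (U.submatrix id j.succAbove).det := by
        rw [Finset.mul_sum]
        exact Finset.sum_congr rfl fun j _ => by ring
    _ = 0 := by rw [sum_alternating_mul_det_submatrix_succAbove, mul_zero]

variable {n : ℕ}

def appendCol (P : Matrix (Fin (n + 1)) (Fin n) R) (v : Fin (n + 1) → R) :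
    Matrix (Fin (n + 1)) (Fin (n + 1)) R :=
  of fun r j => if h : (j : ℕ) < n then P r ⟨j, h⟩ else v r

theorem appendCol_eq_updateCol (P : Matrix (Fin (n + 1)) (Fin n) R) (v : Fin (n + 1) → R) :
    appendCol P v = (appendCol P 0).updateCol (Fin.last n) v := by
  ext r j
  by_cases hj : j = Fin.last n
  · simp [appendCol, hj]
  · simp [appendCol, hj, Fin.val_lt_last hj]

def detAppendCol (P : Matrix (Fin (n + 1)) (Fin n) R) : (Fin (n + 1) → R) →ₗ[R] R where
  toFun v := (appendCol P v).det
  map_add' v w := by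
    rw [appendCol_eq_updateCol P (v + w), appendCol_eq_updateCol P v,
      appendCol_eq_updateCol P w, det_updateCol_add]
  map_smul' c v := by
    rw [appendCol_eq_updateCol P (c • v), appendCol_eq_updateCol P v, det_updateCol_smul,
      RingHom.id_apply, smul_eq_mul]

theorem detAppendCol_apply_col (P : Matrix (Fin (n + 1)) (Fin n) R) (c : Fin n) :
    detAppendCol P (fun r => P r c) = 0 :=
  det_zero_of_column_eq (Fin.castSucc_lt_last c).ne fun r => by simp [appendCol]

end Determinant

section AppendVecs

variable {α : Type*} {n k : ℕ}

/-- The matrix `(Q, a₀, …, a_{k-1})` of the statement. -/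
def appendVecs (Q : Matrix (Fin (n + 1)) (Fin (n + 2 - k)) α) (a : Fin k → Fin (n + 1) → α) :
    Matrix (Fin (n + 1)) (Fin (n + 2)) α :=
  of fun r j => if h : (j : ℕ) < n + 2 - k then Q r ⟨j, h⟩ else a ⟨j - (n + 2 - k), by omega⟩ r

variable (Q : Matrix (Fin (n + 1)) (Fin (n + 2 - k)) α) (a : Fin k → Fin (n + 1) → α)

theorem appendVecs_apply_of_lt (r : Fin (n + 1)) {j : Fin (n + 2)} (h : (j : ℕ) < n + 2 - k) :
    appendVecs Q a r j = Q r ⟨j, h⟩ := by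
  simp [appendVecs, h]

theorem appendVecs_apply_natAdd (hk : k ≤ n + 2) (r : Fin (n + 1)) (i : Fin k) :
    appendVecs Q a r ⟨n + 2 - k + i, by omega⟩ = a i r := by
  simp [appendVecs]

theorem appendVecs_submatrix_succAbove (hk : k ≤ n + 2) (i : Fin k) :
    (appendVecs Q a).submatrix id (Fin.succAbove ⟨n + 2 - k + i, by omega⟩) =
      of fun r (j : Fin (n + 1)) =>
        if h : (j : ℕ) < n + 2 - k then Q r ⟨j, h⟩
        else if (j : ℕ) - (n + 2 - k) < (i : ℕ) then a ⟨(j : ℕ) - (n + 2 - k), by omega⟩ r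
        else a ⟨(j : ℕ) - (n + 2 - k) + 1, by omega⟩ r := by
  ext r j
  simp only [submatrix_apply, id, of_apply, appendVecs]
  rcases lt_or_ge (j : ℕ) (n + 2 - k + i) with hlt | hge
  · rw [Fin.succAbove_of_castSucc_lt _ j hlt]
    simp only [Fin.val_castSucc]
    split_ifs <;> first | rfl | omega
  · rw [Fin.succAbove_of_le_castSucc _ j hge]
    simp only [Fin.val_succ]
    split_ifs <;> first | omega | exact congrArg (a · r) (Fin.ext (by simp only; omega))

end AppendVecs

theorem sum_alternating_detAppendCol_mul_det_appendVecs {R : Type*} [CommRing R] {n k : ℕ}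
    (hk : k ≤ n + 2) (P : Matrix (Fin (n + 1)) (Fin n) R) (g : Fin (n + 2 - k) → Fin n)
    (a : Fin k → Fin (n + 1) → R) :
    ∑ i : Fin k, (-1) ^ (i : ℕ) * (detAppendCol P (a i) *
      ((appendVecs (P.submatrix id g) a).submatrix id
        (Fin.succAbove ⟨n + 2 - k + i, by omega⟩)).det) = 0 := by
  set U := appendVecs (P.submatrix id g) a
  let e (i : Fin k) : Fin (n + 2) := ⟨n + 2 - k + i, by omega⟩
  have he : Function.Injective e := fun i i' h => Fin.ext (by simpa [e] using congrArg Fin.val h)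
  have hvanish : ∀ j ∉ Set.range e,
      (-1) ^ (j : ℕ) * detAppendCol P (fun r => U r j) * (U.submatrix id j.succAbove).det = 0 := by
    intro j hj
    have hlt : (j : ℕ) < n + 2 - k := by
      by_contra! hge
      exact hj ⟨⟨j - (n + 2 - k), by omega⟩, Fin.ext (by simp [e]; omega)⟩
    simp only [U, appendVecs_apply_of_lt _ _ _ hlt, submatrix_apply, id,
      detAppendCol_apply_col, mul_zero, zero_mul]
  apply (isUnit_neg_one.pow (n + 2 - k)).mul_left_cancel
  rw [mul_zero, ← sum_alternating_map_col_mul_det_submatrix_succAbove (detAppendCol P) U,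
    Finset.mul_sum]
  refine Fintype.sum_of_injective e he _ _ hvanish fun i => ?_
  simp only [U, e, appendVecs_apply_natAdd _ _ hk, pow_add]
  ring

end Matrix

/-- Generalized Plücker relation (Corollary 2.3.1): let `P` be an `(n+1)×n` complex
matrix, let `Q = P ∘ g` be obtained from `P` by deleting `k-2` columns (so `g` is a
strictly monotone selection of the remaining `n+2-k` columns), with `3 ≤ k ≤ n`
(i.e. `k < N` where `N = n+1` is the number of rows), and let `a 0, …, a (k-1)` be
vectors in `ℂ^{n+1}`. Then
`∑_{i} (-1)^i det(P, a i) · det(Q, a 0, …, â i, …, a (k-1)) = 0`. -/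
theorem plucker_general {n k : ℕ} (hkN : k < n + 1)
    (P : Matrix (Fin (n + 1)) (Fin n) ℂ)
    (g : Fin (n + 2 - k) → Fin n)
    (a : Fin k → Fin (n + 1) → ℂ) :
    ∑ i : Fin k,
      (-1 : ℂ) ^ (i : ℕ) *
        (Matrix.det (Matrix.of fun r (j : Fin (n + 1)) =>
            if h : (j : ℕ) < n then P r ⟨j, h⟩ else a i r) *
         Matrix.det (Matrix.of fun r (j : Fin (n + 1)) =>
            if h : (j : ℕ) < n + 2 - k then P r (g ⟨j, h⟩)
            else if (j : ℕ) - (n + 2 - k) < (i : ℕ) then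
              a ⟨(j : ℕ) - (n + 2 - k), by omega⟩ r
            else
              a ⟨(j : ℕ) - (n + 2 - k) + 1, by omega⟩ r)) = 0 := by
  have hk : k ≤ n + 2 := by omega
  have h := sum_alternating_detAppendCol_mul_det_appendVecs hk P g a
  simpa only [appendVecs_submatrix_succAbove _ _ hk, detAppendCol, appendCol, LinearMap.coe_mk,
    AddHom.coe_mk, submatrix_apply, id] using h
end

section
/- Trace identity for Wronskians: Let φ : ℝ → ℂ^N be smooth with φ_{xx} = -Aφ for a constant matrix A ∈ ℂ^{N×N}, and let f = det(φ, φ', ..., φ^{(N-1)}) be the Wronskian. Then Tr(A)·f = |φ, φ', ..., φ^{(N-3)}, φ^{(N-1)}, φ^{(N)}| − |φ, φ', ..., φ^{(N-2)}, φ^{(N+1)}|, where φ^{(j)} denotes the j-th x-derivative. -/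
open Matrix Finset

/-- Trace identity for determinants: `Tr(A) · det M = ∑ⱼ det (M with column j replaced by A·colⱼ)`. -/
lemma trace_mul_det_aux {n : ℕ} (A M : Matrix (Fin n) (Fin n) ℂ) :
    A.trace * M.det = ∑ j : Fin n, (M.updateCol j (A.mulVec fun i => M i j)).det := by
  symm
  have h1 : ∀ j : Fin n, (M.updateCol j (A.mulVec fun i => M i j)).det
      = (M.adjugate * A * M) j j := by
    intro j
    rw [← Matrix.cramer_apply, Matrix.cramer_eq_adjugate_mulVec, Matrix.mulVec_mulVec]
    simp [Matrix.mulVec, Matrix.mul_apply, dotProduct]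
  calc ∑ j : Fin n, (M.updateCol j (A.mulVec fun i => M i j)).det
      = (M.adjugate * A * M).trace := by simp [Matrix.trace, Matrix.diag, h1]
    _ = (M * M.adjugate * A).trace := by rw [Matrix.trace_mul_cycle]
    _ = A.trace * M.det := by
        rw [Matrix.mul_adjugate, Matrix.smul_mul, Matrix.one_mul, Matrix.trace_smul]
        simp [mul_comm]

/-- Trace identity for Wronskians: if `φ : ℝ → ℂ^N` is smooth with `φ'' = -Aφ`
and `f = |φ, φ', …, φ^{(N-1)}|` is the Wronskian, then
`Tr(A)·f = |φ, …, φ^{(N-3)}, φ^{(N-1)}, φ^{(N)}| − |φ, …, φ^{(N-2)}, φ^{(N+1)}|`. -/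
theorem wronskian_trace_identity {N : ℕ} (hN : 3 ≤ N)
    (A : Matrix (Fin N) (Fin N) ℂ) (φ : ℝ → Fin N → ℂ)
    (hφ : ContDiff ℝ (⊤ : ℕ∞) φ)
    (hode : ∀ x, iteratedDeriv 2 φ x = -(A.mulVec (φ x))) :
    ∀ x : ℝ,
      A.trace * Matrix.det (Matrix.of fun i (j : Fin N) => iteratedDeriv (j : ℕ) φ x i) =
        Matrix.det (Matrix.of fun i (j : Fin N) =>
          if (j : ℕ) < N - 2 then iteratedDeriv (j : ℕ) φ x i
          else if (j : ℕ) = N - 2 then iteratedDeriv (N - 1) φ x i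
          else iteratedDeriv N φ x i) -
        Matrix.det (Matrix.of fun i (j : Fin N) =>
          if (j : ℕ) < N - 1 then iteratedDeriv (j : ℕ) φ x i
          else iteratedDeriv (N + 1) φ x i) := by
  -- iterated derivatives commute with multiplication by `A`
  have hmul : ∀ (k : ℕ), iteratedDeriv k (fun y => A.mulVec (φ y))
      = fun y => A.mulVec (iteratedDeriv k φ y) := by
    intro k
    set L : (Fin N → ℂ) →L[ℝ] (Fin N → ℂ) :=
      LinearMap.toContinuousLinearMap ((Matrix.mulVecLin A).restrictScalars ℝ) with hLdef
    have hL : (fun y => A.mulVec (φ y)) = L ∘ φ := rfl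
    funext y
    rw [hL, iteratedDeriv_eq_iteratedFDeriv,
      ContinuousLinearMap.iteratedFDeriv_comp_left L (hφ.contDiffAt (x := y))
        (by exact_mod_cast (le_top : ((k : ℕ∞)) ≤ ⊤))]
    simp only [ContinuousLinearMap.compContinuousMultilinearMap_coe, Function.comp_apply,
      ← iteratedDeriv_eq_iteratedFDeriv]
    rfl
  -- the ODE propagates to higher derivatives
  have key : ∀ (k : ℕ) (y : ℝ),
      iteratedDeriv (k + 2) φ y = -(A.mulVec (iteratedDeriv k φ y)) := by
    intro k y
    have h2 : iteratedDeriv 2 φ = deriv (deriv φ) := by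
      rw [show (2 : ℕ) = 0 + 1 + 1 from rfl, iteratedDeriv_succ', iteratedDeriv_succ',
        iteratedDeriv_zero]
    have hsh : iteratedDeriv (k + 2) φ = iteratedDeriv k (iteratedDeriv 2 φ) := by
      rw [show k + 2 = k + 1 + 1 from rfl, iteratedDeriv_succ', iteratedDeriv_succ', h2]
    have h2' : iteratedDeriv 2 φ = fun z => -(A.mulVec (φ z)) := funext hode
    rw [hsh, h2', iteratedDeriv_fun_neg, hmul k]
  intro x
  set M : Matrix (Fin N) (Fin N) ℂ :=
    Matrix.of fun i (j : Fin N) => iteratedDeriv (j : ℕ) φ x i with hM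
  set B1 : Matrix (Fin N) (Fin N) ℂ :=
    Matrix.of fun i (j : Fin N) =>
      if (j : ℕ) < N - 2 then iteratedDeriv (j : ℕ) φ x i
      else if (j : ℕ) = N - 2 then iteratedDeriv (N - 1) φ x i
      else iteratedDeriv N φ x i with hB1
  set B2 : Matrix (Fin N) (Fin N) ℂ :=
    Matrix.of fun i (j : Fin N) =>
      if (j : ℕ) < N - 1 then iteratedDeriv (j : ℕ) φ x i
      else iteratedDeriv (N + 1) φ x i with hB2
  have j0lt : N - 2 < N := by omega
  have j1lt : N - 1 < N := by omega
  set j0 : Fin N := ⟨N - 2, j0lt⟩ with hj0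
  set j1 : Fin N := ⟨N - 1, j1lt⟩ with hj1
  have hj01 : j0 ≠ j1 := by simp [hj0, hj1, Fin.ext_iff]; omega
  -- evaluate each term of the trace sum
  have hterm : ∀ j : Fin N, (M.updateCol j (A.mulVec fun i => M i j)).det
      = (if j = j0 then B1.det else 0) + (if j = j1 then -B2.det else 0) := by
    intro j
    have hcol : (fun i => M i j) = iteratedDeriv (j : ℕ) φ x := rfl
    have hAv : A.mulVec (iteratedDeriv (j : ℕ) φ x)
        = (-1 : ℂ) • iteratedDeriv ((j : ℕ) + 2) φ x := by
      rw [key (j : ℕ) x]; simp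
    rw [hcol, hAv, Matrix.det_updateCol_smul]
    by_cases h0 : (j : ℕ) < N - 2
    · have hne0 : j ≠ j0 := by simp [hj0, Fin.ext_iff]; omega
      have hne1 : j ≠ j1 := by simp [hj1, Fin.ext_iff]; omega
      rw [if_neg hne0, if_neg hne1]
      have hj2lt : (j : ℕ) + 2 < N := by omega
      set j2 : Fin N := ⟨(j : ℕ) + 2, hj2lt⟩ with hj2
      have hne2 : j2 ≠ j := by simp [hj2, Fin.ext_iff]
      have hzero : (M.updateCol j (iteratedDeriv ((j : ℕ) + 2) φ x)).det = 0 := by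
        apply Matrix.det_zero_of_column_eq hne2.symm
        intro k
        simp [Matrix.updateCol_apply, hne2, hM]
        rfl
      rw [hzero]; ring
    · by_cases h1 : (j : ℕ) = N - 2
      · have hjj0 : j = j0 := by simp [hj0, Fin.ext_iff, h1]
        have hne1 : j ≠ j1 := by simp [hj1, Fin.ext_iff]; omega
        rw [if_pos hjj0, if_neg hne1, add_zero]
        have hNN : (j : ℕ) + 2 = N := by omega
        rw [hNN, hjj0]
        -- B1 is the column swap of the updated matrix
        have hswap : B1 = (M.updateCol j0 (iteratedDeriv N φ x)).submatrix id
            (Equiv.swap j0 j1) := by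
          ext i j'
          by_cases ha : (j' : ℕ) < N - 2
          · have ha0 : j' ≠ j0 := by simp [hj0, Fin.ext_iff]; omega
            have ha1 : j' ≠ j1 := by simp [hj1, Fin.ext_iff]; omega
            simp [hB1, Matrix.submatrix_apply, Equiv.swap_apply_of_ne_of_ne ha0 ha1,
              Matrix.updateCol_apply, ha0, ha, hM]
          · by_cases hb : (j' : ℕ) = N - 2
            · have hb0 : j' = j0 := by simp [hj0, Fin.ext_iff, hb]
              simp [hB1, Matrix.submatrix_apply, hb0, Equiv.swap_apply_left,
                Matrix.updateCol_apply, hj01.symm, ha, hb, hM, hj1]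
              simp [hj0, show ¬(N - 1 = N - 2) by omega]
            · have hb1 : j' = j1 := by
                simp only [hj1, Fin.ext_iff]; have := j'.isLt; omega
              simp [hB1, Matrix.submatrix_apply, hb1, Equiv.swap_apply_right,
                Matrix.updateCol_apply, ha, hb, hj1, show ¬(N - 1 < N - 2) by omega,
                show ¬(N - 1 = N - 2) by omega]
        rw [hswap, Matrix.det_permute', Equiv.Perm.sign_swap hj01]
        push_cast
        ring
      · have hj1' : (j : ℕ) = N - 1 := by have := j.isLt; omega
        have hjj1 : j = j1 := by simp [hj1, Fin.ext_iff, hj1']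
        have hne0 : j ≠ j0 := by simp [hj0, Fin.ext_iff]; omega
        rw [if_neg hne0, if_pos hjj1, zero_add]
        have hNN : (j : ℕ) + 2 = N + 1 := by omega
        rw [hNN, hjj1]
        have hBeq : B2 = M.updateCol j1 (iteratedDeriv (N + 1) φ x) := by
          ext i j'
          by_cases ha : (j' : ℕ) < N - 1
          · have ha1 : j' ≠ j1 := by simp [hj1, Fin.ext_iff]; omega
            simp [hB2, Matrix.updateCol_apply, ha1, ha, hM]
          · have hb1 : j' = j1 := by
              simp only [hj1, Fin.ext_iff]; have := j'.isLt; omega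
            simp [hB2, Matrix.updateCol_apply, hb1, ha]
            simp [hj1]
        rw [hBeq]
        ring
  rw [trace_mul_det_aux A M]
  calc ∑ j : Fin N, (M.updateCol j (A.mulVec fun i => M i j)).det
      = ∑ j : Fin N, ((if j = j0 then B1.det else 0) + (if j = j1 then -B2.det else 0)) :=
        Finset.sum_congr rfl fun j _ => hterm j
    _ = B1.det - B2.det := by
        rw [Finset.sum_add_distrib, Finset.sum_ite_eq' Finset.univ j0 fun _ => B1.det,
          Finset.sum_ite_eq' Finset.univ j1 fun _ => -B2.det]
        simp [sub_eq_add_neg]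
end

section
/- The function v(x,t) = v₀ − 4v₀/(4v₀²(x − 6v₀²t)² + 1), with v₀ ∈ ℝ, v₀ ≠ 0, is a solution of the mKdV equation v_t + 6v²v_x + v_{xxx} = 0. -/
/-- `x`-partial derivative of a scalar function of `(x,t)`. -/
noncomputable def dx (f : ℝ → ℝ → ℝ) : ℝ → ℝ → ℝ :=
  fun x t => deriv (fun y => f y t) x

/-- `t`-partial derivative of a scalar function of `(x,t)`. -/
noncomputable def dt (f : ℝ → ℝ → ℝ) : ℝ → ℝ → ℝ :=
  fun x t => deriv (fun s => f x s) t

/-!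
The solution is a travelling wave `v(x,t) = w(x - c t)` with speed `c = 6 v₀²`, so the mKdV
equation reduces to the ODE `-c w' + 6 w² w' + w''' = 0` for the profile
`w(ξ) = v₀ - 4 v₀ / p(ξ)`, `p(ξ) = 4 v₀² ξ² + 1`. With `w' = 32 v₀³ ξ / p²` and
`w² - v₀² = -8 v₀² (p - 2) / p²`, the nonlinear term `6 (w² - v₀²) w'` is exactly `-w'''`.
-/

def travelingWave (w : ℝ → ℝ) (c : ℝ) : ℝ → ℝ → ℝ := fun x t => w (x - c * t)

section TravelingWave

variable (w : ℝ → ℝ) (c : ℝ)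

theorem dx_travelingWave : dx (travelingWave w c) = travelingWave (deriv w) c := by
  funext x t
  exact deriv_comp_sub_const (f := w) (x := x) (a := c * t)

theorem dt_travelingWave :
    dt (travelingWave w c) = fun x t => -c * deriv w (x - c * t) := by
  funext x t
  have h := deriv_comp_mul_left (-c) (fun u => w (x + u)) t
  simp only [smul_eq_mul, deriv_comp_const_add] at h
  simpa only [dt, travelingWave, neg_mul, ← sub_eq_add_neg] using h

theorem mkdv_travelingWave
    (hw : ∀ ξ, -c * deriv w ξ + 6 * w ξ ^ 2 * deriv w ξ + deriv (deriv (deriv w)) ξ = 0)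
    (x t : ℝ) :
    let v := travelingWave w c
    dt v x t + 6 * v x t ^ 2 * dx v x t + dx (dx (dx v)) x t = 0 := by
  simp only [dx_travelingWave, dt_travelingWave]
  exact hw _

end TravelingWave

noncomputable def rationalProfile (v0 ξ : ℝ) : ℝ := v0 - 4 * v0 / (4 * v0 ^ 2 * ξ ^ 2 + 1)

section RationalProfile

variable (v0 : ℝ)

theorem profileDenom_pos (ξ : ℝ) : 0 < 4 * v0 ^ 2 * ξ ^ 2 + 1 := by positivity

theorem hasDerivAt_profileDenom (ξ : ℝ) :
    HasDerivAt (fun ξ => 4 * v0 ^ 2 * ξ ^ 2 + 1) (8 * v0 ^ 2 * ξ) ξ := by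
  refine (((hasDerivAt_pow 2 ξ).const_mul (4 * v0 ^ 2)).add_const 1).congr_deriv ?_
  norm_num
  ring

theorem deriv_rationalProfile :
    deriv (rationalProfile v0) = fun ξ => 32 * v0 ^ 3 * ξ / (4 * v0 ^ 2 * ξ ^ 2 + 1) ^ 2 := by
  funext ξ
  have hp := (profileDenom_pos v0 ξ).ne'
  refine (((hasDerivAt_const ξ (4 * v0)).div (hasDerivAt_profileDenom v0 ξ) hp).const_sub v0
    |>.congr_deriv ?_).deriv
  field_simp
  ring

theorem deriv_deriv_rationalProfile :
    deriv (deriv (rationalProfile v0)) =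
      fun ξ => 32 * v0 ^ 3 * (1 - 12 * v0 ^ 2 * ξ ^ 2) / (4 * v0 ^ 2 * ξ ^ 2 + 1) ^ 3 := by
  rw [deriv_rationalProfile]
  funext ξ
  have hp := (profileDenom_pos v0 ξ).ne'
  refine ((((hasDerivAt_id' ξ).const_mul (32 * v0 ^ 3)).div
    ((hasDerivAt_profileDenom v0 ξ).pow 2) (pow_ne_zero 2 hp)).congr_deriv ?_).deriv
  simp only [Pi.pow_apply]
  field_simp
  ring

theorem deriv_deriv_deriv_rationalProfile :
    deriv (deriv (deriv (rationalProfile v0))) =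
      fun ξ => -1536 * v0 ^ 5 * ξ * (1 - 4 * v0 ^ 2 * ξ ^ 2) / (4 * v0 ^ 2 * ξ ^ 2 + 1) ^ 4 := by
  rw [deriv_deriv_rationalProfile]
  funext ξ
  have hp := (profileDenom_pos v0 ξ).ne'
  have hnum : HasDerivAt (fun ξ => 32 * v0 ^ 3 * (1 - 12 * v0 ^ 2 * ξ ^ 2))
      (-768 * v0 ^ 5 * ξ) ξ := by
    refine ((((hasDerivAt_pow 2 ξ).const_mul (12 * v0 ^ 2)).const_sub 1).const_mul
      (32 * v0 ^ 3)).congr_deriv ?_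
    norm_num
    ring
  refine ((hnum.div ((hasDerivAt_profileDenom v0 ξ).pow 3)
    (pow_ne_zero 3 hp)).congr_deriv ?_).deriv
  simp only [Pi.pow_apply]
  field_simp
  ring

theorem rationalProfile_ode (ξ : ℝ) :
    -(6 * v0 ^ 2) * deriv (rationalProfile v0) ξ
      + 6 * rationalProfile v0 ξ ^ 2 * deriv (rationalProfile v0) ξ
      + deriv (deriv (deriv (rationalProfile v0))) ξ = 0 := by
  rw [deriv_deriv_deriv_rationalProfile, deriv_rationalProfile, rationalProfile]
  have hp := (profileDenom_pos v0 ξ).ne'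
  field_simp
  ring

end RationalProfile

theorem mkdv_simplest_rational_solution_general (v0 : ℝ) :
    let v : ℝ → ℝ → ℝ := fun x t =>
      v0 - 4 * v0 / (4 * v0 ^ 2 * (x - 6 * v0 ^ 2 * t) ^ 2 + 1)
    ∀ x t, dt v x t + 6 * (v x t) ^ 2 * dx v x t + dx (dx (dx v)) x t = 0 :=
  mkdv_travelingWave (rationalProfile v0) (6 * v0 ^ 2) (rationalProfile_ode v0)

/-- The rational function `v = v₀ − 4v₀/(4v₀²(x − 6v₀²t)² + 1)` solves the mKdV
equation `v_t + 6v²v_x + v_{xxx} = 0`. -/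
theorem mkdv_simplest_rational_solution (v0 : ℝ) (hv0 : v0 ≠ 0) :
    let v : ℝ → ℝ → ℝ := fun x t =>
      v0 - 4 * v0 / (4 * v0 ^ 2 * (x - 6 * v0 ^ 2 * t) ^ 2 + 1)
    ∀ x t, dt v x t + 6 * (v x t) ^ 2 * dx v x t + dx (dx (dx v)) x t = 0 :=
  mkdv_simplest_rational_solution_general v0
end
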